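/- arXiv:1611.06991 — 2 statements merged into one kernel-verified Lean document; each statement's English description precedes it below -/
import Mathlib

section
/- For a complex matrix A, the N-th symmetric power of the conjugate transpose satisfies (A*)̄ = B^{-1} (Ā)* B, where * denotes Hermitian adjoint and B is the diagonal matrix of multinomial coefficients. -/
/-!
Expand `(yᵀ A x)^N = (∑ i, y_i (A x)_i)^N` by the multinomial theorem: the coefficient of
`y^m x^n` is `multinomial m * (symPow A)_{mn}`. Since `yᵀ A x = xᵀ Aᵀ y`, exchanging the roles of
`x` and `y` gives `B * symPow Aᵀ = (symPow A)ᵀ * B`. The adjoint form follows by conjugating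
entrywise, which commutes with `symPow` and fixes the real matrix `B`.
-/

open MvPolynomial Matrix BigOperators

/-- Multi-indices of `d+1` entries with total degree `N`. -/
abbrev MIdx (d N : ℕ) := {m : Fin (d+1) → ℕ // ∑ i, m i = N}

instance (d N : ℕ) : Fintype (MIdx d N) :=
  Fintype.subtype (Finset.Nat.antidiagonalTuple (d+1) N)
    (fun _ => Finset.Nat.mem_antidiagonalTuple)

/-- The `(m,n)` matrix element of the symmetric power of `A`:
the coefficient of `x^n` in `(Ax)^m`. -/
noncomputable def symPowEntry {R : Type} [CommSemiring R] {d : ℕ}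
    (A : Matrix (Fin (d+1)) (Fin (d+1)) R) (m n : Fin (d+1) → ℕ) : R :=
  MvPolynomial.coeff (Finsupp.equivFunOnFinite.symm n)
    (∏ i, (∑ j, MvPolynomial.C (A i j) * MvPolynomial.X j) ^ m i)

/-- The `N`-th symmetric power of `A`, as a matrix indexed by multi-indices
of total degree `N`. -/
noncomputable def symPow {R : Type} [CommSemiring R] (d N : ℕ)
    (A : Matrix (Fin (d+1)) (Fin (d+1)) R) : Matrix (MIdx d N) (MIdx d N) R :=
  fun m n => symPowEntry A m.1 n.1

/-- `Γ(g)_{mn}`: the coefficient of `x^n` in `(Σ_{μ,λ} g_{μλ} x_λ ∂_μ) x^m`. -/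
noncomputable def gammaEntry {d : ℕ} (g : Matrix (Fin (d+1)) (Fin (d+1)) ℂ)
    (m n : Fin (d+1) → ℕ) : ℂ :=
  MvPolynomial.coeff (Finsupp.equivFunOnFinite.symm n)
    (∑ μ, ∑ lam, MvPolynomial.C (g μ lam) *
      (MvPolynomial.X lam * MvPolynomial.pderiv μ
        (MvPolynomial.monomial (Finsupp.equivFunOnFinite.symm m) 1)))

/-- The degree-`N` generator `Γ(g)` of the symmetric representation. -/
noncomputable def gammaMat (d N : ℕ) (g : Matrix (Fin (d+1)) (Fin (d+1)) ℂ) :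
    Matrix (MIdx d N) (MIdx d N) ℂ :=
  fun m n => gammaEntry g m.1 n.1

/-- The diagonal matrix `B` of multinomial coefficients of degree `N`. -/
noncomputable def multinomMat (d N : ℕ) : Matrix (MIdx d N) (MIdx d N) ℂ :=
  Matrix.diagonal fun m => (Nat.multinomial Finset.univ m.1 : ℂ)

namespace MvPolynomial

variable {R σ τ : Type*} [CommSemiring R]

theorem coeff_coeff_commAlgEquiv (p : MvPolynomial σ (MvPolynomial τ R)) (m : σ →₀ ℕ) (n : τ →₀ ℕ) :
    ((commAlgEquiv R σ τ p).coeff n).coeff m = (p.coeff m).coeff n := by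
  classical
  induction p using MvPolynomial.induction_on' with
  | monomial a q =>
    induction q using MvPolynomial.induction_on' with
    | monomial b r =>
      rw [show commAlgEquiv R σ τ (monomial a (monomial b r)) = monomial b (monomial a r) from
        AddMonoidAlgebra.commAlgEquiv_single_single _ _ _]
      simp only [coeff_monomial, apply_ite (coeff _), coeff_zero]
      split_ifs <;> rfl
    | add q₁ q₂ h₁ h₂ => simp only [map_add, coeff_add, h₁, h₂]
  | add p₁ p₂ h₁ h₂ => simp only [map_add, coeff_add, h₁, h₂]

end MvPolynomial

section

variable {R ι : Type*} [CommSemiring R] [Fintype ι]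

/-- `yᵀ A x`, with the `y`-variables outside and the `x`-variables in the coefficients. -/
noncomputable def bilinearPoly (A : Matrix ι ι R) : MvPolynomial ι (MvPolynomial ι R) :=
  ∑ i, (∑ j, C (A i j) * X j) • X i

theorem commAlgEquiv_bilinearPoly (A : Matrix ι ι R) :
    commAlgEquiv R ι ι (bilinearPoly A) = bilinearPoly Aᵀ := by
  simp only [bilinearPoly, smul_eq_C_mul, map_sum, map_mul, commAlgEquiv_C, commAlgEquiv_X,
    MvPolynomial.map_C, MvPolynomial.map_X, Finset.sum_mul, transpose_apply]
  rw [Finset.sum_comm]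
  refine Finset.sum_congr rfl fun j _ => Finset.sum_congr rfl fun i _ => ?_
  ring

end

theorem coeff_coeff_bilinearPoly_pow {R : Type} [CommSemiring R] {d N : ℕ}
    (A : Matrix (Fin (d+1)) (Fin (d+1)) R) {m : Fin (d+1) → ℕ} (hm : ∑ i, m i = N)
    (n : Fin (d+1) → ℕ) :
    ((bilinearPoly A ^ N).coeff (Finsupp.equivFunOnFinite.symm m)).coeff
      (Finsupp.equivFunOnFinite.symm n) = Nat.multinomial Finset.univ m * symPowEntry A m n := by
  rw [bilinearPoly, coeff_linearCombination_X_pow_of_fintype, Finsupp.sum_fintype _ _ (by simp),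
    if_pos (by simpa using hm), ← Finsupp.multinomial_of_support_subset (Finset.subset_univ _),
    Finsupp.prod_fintype _ _ (by simp), ← C_eq_coe_nat, coeff_C_mul]
  rfl

theorem multinomial_mul_symPowEntry_transpose {R : Type} [CommSemiring R] {d N : ℕ}
    (A : Matrix (Fin (d+1)) (Fin (d+1)) R) {m n : Fin (d+1) → ℕ} (hm : ∑ i, m i = N)
    (hn : ∑ i, n i = N) :
    (Nat.multinomial Finset.univ m : R) * symPowEntry Aᵀ m n
      = Nat.multinomial Finset.univ n * symPowEntry A n m := by
  rw [← coeff_coeff_bilinearPoly_pow _ hm, ← coeff_coeff_bilinearPoly_pow _ hn,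
    ← commAlgEquiv_bilinearPoly, ← map_pow, coeff_coeff_commAlgEquiv]

theorem symPow_map {R S : Type} [CommSemiring R] [CommSemiring S] (d N : ℕ) (f : R →+* S)
    (A : Matrix (Fin (d+1)) (Fin (d+1)) R) : symPow d N (A.map f) = (symPow d N A).map f := by
  ext m n
  rw [map_apply, symPow, symPow, symPowEntry, symPowEntry, ← coeff_map]
  simp only [map_prod, map_pow, map_sum, map_mul, map_C, map_X, map_apply]

theorem inv_multinomMat (d N : ℕ) :
    (multinomMat d N)⁻¹ = diagonal fun m => (Nat.multinomial Finset.univ m.1 : ℂ)⁻¹ := by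
  refine inv_eq_left_inv ?_
  rw [multinomMat, diagonal_mul_diagonal, ← diagonal_one]
  congr 1
  ext m
  exact inv_mul_cancel₀ (by exact_mod_cast (Nat.multinomial_pos _ _).ne')

theorem symPow_transpose (d N : ℕ) (A : Matrix (Fin (d+1)) (Fin (d+1)) ℂ) :
    symPow d N Aᵀ = (multinomMat d N)⁻¹ * (symPow d N A)ᵀ * multinomMat d N := by
  ext ⟨m, hm⟩ ⟨n, hn⟩
  have hB : (Nat.multinomial Finset.univ m : ℂ) ≠ 0 := by
    exact_mod_cast (Nat.multinomial_pos _ _).ne'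
  rw [inv_multinomMat, multinomMat, mul_diagonal, diagonal_mul, transpose_apply]
  simp only [symPow]
  field_simp
  linear_combination multinomial_mul_symPowEntry_transpose A hm hn

/-- Adjoint form of the Transpose Lemma: `(A*)̄ = B⁻¹ (Ā)* B`. -/
theorem symPow_conjTranspose (d N : ℕ) (A : Matrix (Fin (d+1)) (Fin (d+1)) ℂ) :
    symPow d N Aᴴ = (multinomMat d N)⁻¹ * (symPow d N A)ᴴ * multinomMat d N := by
  change symPow d N (Aᵀ.map (starRingEnd ℂ)) = _
  rw [symPow_map, symPow_transpose, Matrix.map_mul, Matrix.map_mul, inv_multinomMat, multinomMat]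
  simp only [diagonal_map, map_zero, map_inv₀, map_natCast, conjTranspose, RCLike.star_def]
end

section
/- Dual orthogonality: under the K-condition A* p A = D, the Krawtchouk matrix Φ = (Ā)* of degree N also satisfies Φ* (B D̄)^{-1} Φ = (B p̄)^{-1}. -/
open MvPolynomial Matrix BigOperators

variable {d : ℕ}

lemma prod_monomial' {σ ι R : Type*} [CommSemiring R] (s : Finset ι) (a : ι → (σ →₀ ℕ)) (c : ι → R) :
    ∏ i ∈ s, monomial (a i) (c i) = monomial (∑ i ∈ s, a i) (∏ i ∈ s, c i) := by
  induction s using Finset.cons_induction with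
  | empty => simp
  | cons i s hi ih => rw [Finset.prod_cons, Finset.sum_cons, Finset.prod_cons, ih, monomial_mul]

lemma CX_prod {R : Type*} [CommSemiring R] (a : Fin (d+1) → R) (k : Fin (d+1) → ℕ) :
    ∏ j, (MvPolynomial.C (a j) * MvPolynomial.X j) ^ k j
      = monomial (Finsupp.equivFunOnFinite.symm k) (∏ j, a j ^ k j) := by
  have : ∀ j : Fin (d+1), (MvPolynomial.C (a j) * MvPolynomial.X j) ^ k j
      = monomial (Finsupp.single j (k j)) (a j ^ k j) := by
    intro j
    rw [mul_pow, ← C_pow, X_pow_eq_monomial, C_mul_monomial, mul_one]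
  rw [Finset.prod_congr rfl (fun j _ => this j), prod_monomial']
  have h2 : (∑ i, Finsupp.single i (k i)) = Finsupp.equivFunOnFinite.symm k := by
    ext j; simp [Finsupp.finset_sum_apply, Finsupp.single_apply]
  rw [h2]

-- single factor expansion
lemma factor_expand (a : Fin (d+1) → ℂ) (mi : ℕ) :
    (∑ j, MvPolynomial.C (a j) * MvPolynomial.X j) ^ mi
      = ∑ k ∈ Finset.univ.piAntidiag mi,
          monomial (Finsupp.equivFunOnFinite.symm k)
            ((Nat.multinomial Finset.univ k : ℂ) * ∏ j, a j ^ k j) := by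
  rw [Finset.sum_pow_eq_sum_piAntidiag]
  refine Finset.sum_congr rfl fun k hk => ?_
  rw [CX_prod, ← C_eq_coe_nat, C_mul_monomial]

/-- contingency tables with row sums `m` and column sums `n` -/
noncomputable def tab (d : ℕ) (m n : Fin (d+1) → ℕ) : Finset ((Fin (d+1)) → (Fin (d+1)) → ℕ) :=
  (Fintype.piFinset fun i => Finset.univ.piAntidiag (m i)).filter
    (fun g => (fun j => ∑ i, g i j) = n)

lemma symPowEntry_expand (A : Matrix (Fin (d+1)) (Fin (d+1)) ℂ) (m n : Fin (d+1) → ℕ) :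
    symPowEntry A m n = ∑ g ∈ tab d m n,
      (∏ i, (Nat.multinomial Finset.univ (g i) : ℂ)) * ∏ i, ∏ j, A i j ^ g i j := by
  unfold symPowEntry
  rw [Finset.prod_congr rfl (fun i (_ : i ∈ Finset.univ) => factor_expand (A i) (m i)),
    Finset.prod_univ_sum]
  rw [Finset.sum_congr rfl (fun g _ => prod_monomial' Finset.univ _ _)]
  rw [MvPolynomial.coeff_sum]
  rw [tab, Finset.sum_filter]
  refine Finset.sum_congr rfl fun g hg => ?_
  rw [MvPolynomial.coeff_monomial]
  have : (∑ i, Finsupp.equivFunOnFinite.symm (g i)) = Finsupp.equivFunOnFinite.symm n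
      ↔ (fun j => ∑ i, g i j) = n := by
    constructor
    · intro h
      funext j
      have := DFunLike.congr_fun h j
      simpa [Finsupp.finset_sum_apply] using this
    · intro h
      ext j
      have := congrFun h j
      simpa [Finsupp.finset_sum_apply] using this
  rw [Finset.prod_mul_distrib]
  split_ifs with h1 h2 h2
  · rfl
  · exact absurd (this.1 h1) h2
  · exact absurd (this.2 h2) h1
  · rfl

lemma tab_mem_iff {m n : Fin (d+1) → ℕ} {g : Fin (d+1) → Fin (d+1) → ℕ} :
    g ∈ tab d m n ↔ (∀ i, ∑ j, g i j = m i) ∧ (∀ j, ∑ i, g i j = n j) := by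
  simp only [tab, Finset.mem_filter, Fintype.mem_piFinset, Finset.mem_piAntidiag]
  constructor
  · rintro ⟨h1, h2⟩
    exact ⟨fun i => (h1 i).1, fun j => congrFun h2 j⟩
  · rintro ⟨h1, h2⟩
    exact ⟨fun i => ⟨h1 i, fun j _ => Finset.mem_univ j⟩, funext h2⟩

lemma tab_transpose_mem {m n : Fin (d+1) → ℕ} {g : Fin (d+1) → Fin (d+1) → ℕ}
    (hg : g ∈ tab d m n) : (fun j i => g i j) ∈ tab d n m := by
  rw [tab_mem_iff] at hg ⊢
  exact ⟨hg.2, hg.1⟩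

lemma mult_tab {m n : Fin (d+1) → ℕ} {g : Fin (d+1) → Fin (d+1) → ℕ} (hg : g ∈ tab d m n) :
    Nat.multinomial Finset.univ m * ∏ i, Nat.multinomial Finset.univ (g i)
      = Nat.multinomial Finset.univ n * ∏ j, Nat.multinomial Finset.univ (fun i => g i j) := by
  rw [tab_mem_iff] at hg
  have key : ∀ (m : Fin (d+1) → ℕ) (g : Fin (d+1) → Fin (d+1) → ℕ),
      (∀ i, ∑ j, g i j = m i) →
      (Nat.multinomial Finset.univ m * ∏ i, Nat.multinomial Finset.univ (g i)) *
        ∏ i, ∏ j, (g i j).factorial = (∑ i, m i).factorial := by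
    intro m g hrow
    calc (Nat.multinomial Finset.univ m * ∏ i, Nat.multinomial Finset.univ (g i)) *
        ∏ i, ∏ j, (g i j).factorial
        = Nat.multinomial Finset.univ m *
            ∏ i, ((∏ j, (g i j).factorial) * Nat.multinomial Finset.univ (g i)) := by
          rw [Finset.prod_mul_distrib]; ring
      _ = Nat.multinomial Finset.univ m * ∏ i, (m i).factorial := by
          congr 1
          refine Finset.prod_congr rfl fun i _ => ?_
          rw [Nat.multinomial_spec, hrow i]
      _ = (∑ i, m i).factorial := by
          rw [mul_comm, Nat.multinomial_spec]
  have h1 := key m g hg.1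
  have h2 := key n (fun j i => g i j) hg.2
  have hsum : ∑ i, m i = ∑ j, n j := by
    rw [← Finset.sum_congr rfl fun i (_ : i ∈ Finset.univ) => hg.1 i,
      ← Finset.sum_congr rfl fun j (_ : j ∈ Finset.univ) => hg.2 j, Finset.sum_comm]
  have hfac : 0 < ∏ i, ∏ j, (g i j).factorial :=
    Finset.prod_pos fun i _ => Finset.prod_pos fun j _ => Nat.factorial_pos _
  have h2' : (Nat.multinomial Finset.univ n * ∏ j, Nat.multinomial Finset.univ (fun i => g i j)) *
      ∏ i, ∏ j, (g i j).factorial = (∑ i, m i).factorial := by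
    rw [hsum, ← h2, Finset.prod_comm]
  exact Nat.eq_of_mul_eq_mul_right hfac (h1.trans h2'.symm)

lemma symPowEntry_transpose (A : Matrix (Fin (d+1)) (Fin (d+1)) ℂ) (m n : Fin (d+1) → ℕ) :
    (Nat.multinomial Finset.univ m : ℂ) * symPowEntry A m n
      = (Nat.multinomial Finset.univ n : ℂ) * symPowEntry Aᵀ n m := by
  rw [symPowEntry_expand, symPowEntry_expand, Finset.mul_sum, Finset.mul_sum]
  refine Finset.sum_nbij' (fun g => fun j i => g i j) (fun g => fun j i => g i j)
    (fun g hg => tab_transpose_mem hg) (fun g hg => tab_transpose_mem hg)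
    (fun g _ => rfl) (fun g _ => rfl) (fun g hg => ?_)
  have hA : ∏ i, ∏ j, A i j ^ g i j = ∏ j, ∏ i, Aᵀ j i ^ g i j := by
    rw [Finset.prod_comm]
    exact Finset.prod_congr rfl fun j _ => Finset.prod_congr rfl fun i _ => rfl
  have hm := mult_tab hg
  have : ((Nat.multinomial Finset.univ m : ℕ) : ℂ) * ∏ i, (Nat.multinomial Finset.univ (g i) : ℂ)
      = ((Nat.multinomial Finset.univ n : ℕ) : ℂ) *
        ∏ j, (Nat.multinomial Finset.univ (fun i => g i j) : ℂ) := by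
    push_cast [← hm]
    ring_nf
    rw [← Nat.cast_prod, ← Nat.cast_prod, ← Nat.cast_mul, ← Nat.cast_mul, hm]
  calc (Nat.multinomial Finset.univ m : ℂ) *
        ((∏ i, (Nat.multinomial Finset.univ (g i) : ℂ)) * ∏ i, ∏ j, A i j ^ g i j)
      = (((Nat.multinomial Finset.univ m : ℕ) : ℂ) *
          ∏ i, (Nat.multinomial Finset.univ (g i) : ℂ)) * ∏ i, ∏ j, A i j ^ g i j := by ring
    _ = (((Nat.multinomial Finset.univ n : ℕ) : ℂ) *
          ∏ j, (Nat.multinomial Finset.univ (fun i => g i j) : ℂ)) *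
          ∏ j, ∏ i, Aᵀ j i ^ g i j := by rw [this, hA]
    _ = _ := by ring

lemma symPowEntry_mul {N : ℕ} (A Cm : Matrix (Fin (d+1)) (Fin (d+1)) ℂ)
    (m n : Fin (d+1) → ℕ) (hm : ∑ i, m i = N) :
    symPowEntry (A * Cm) m n = ∑ l : MIdx d N, symPowEntry A m l.1 * symPowEntry Cm l.1 n := by
  classical
  set f : Fin (d+1) → MvPolynomial (Fin (d+1)) ℂ := fun j => ∑ k, C (Cm j k) * X k with hf
  set P : MvPolynomial (Fin (d+1)) ℂ := ∏ i, (∑ j, C (A i j) * X j) ^ m i with hP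
  have h1 : ∀ i, aeval f (∑ j, C (A i j) * X j) = ∑ k, C ((A * Cm) i k) * X k := by
    intro i
    rw [map_sum]
    simp only [_root_.map_mul, aeval_C, aeval_X, algebraMap_eq, hf]
    simp_rw [Finset.mul_sum, ← mul_assoc, ← C_mul]
    rw [Finset.sum_comm]
    refine Finset.sum_congr rfl fun k _ => ?_
    rw [← Finset.sum_mul, ← map_sum C, Matrix.mul_apply]
  have h2 : ∏ i, (∑ j, C ((A * Cm) i j) * X j) ^ m i = aeval f P := by
    rw [hP, map_prod]
    exact Finset.prod_congr rfl fun i _ => by rw [map_pow, h1]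
  have hhom : P.IsHomogeneous N := by
    have := MvPolynomial.IsHomogeneous.prod Finset.univ
      (fun i => (∑ j, C (A i j) * X j) ^ m i) (fun i => m i) (fun i _ => by
        have hbase : (∑ j, C (A i j) * X j).IsHomogeneous 1 :=
          MvPolynomial.IsHomogeneous.sum _ _ _ fun j _ => isHomogeneous_C_mul_X _ _
        simpa using hbase.pow (m i))
    simpa [hm] using this
  -- coefficient of aeval f P
  have key : ∀ v : Fin (d+1) →₀ ℕ,
      MvPolynomial.coeff (Finsupp.equivFunOnFinite.symm n) (aeval f (monomial v (coeff v P)))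
        = coeff v P * symPowEntry Cm v n := by
    intro v
    rw [aeval_monomial, algebraMap_eq, coeff_C_mul,
      Finsupp.prod_fintype _ _ (fun j => pow_zero (f j))]
    rfl
  have expand : symPowEntry (A * Cm) m n
      = ∑ v ∈ P.support, coeff v P * symPowEntry Cm v n := by
    unfold symPowEntry
    rw [show (∏ i, (∑ j, C ((A * Cm) i j) * X j) ^ m i) = aeval f P from h2]
    conv_lhs => rw [MvPolynomial.as_sum P]
    rw [map_sum, MvPolynomial.coeff_sum]
    exact Finset.sum_congr rfl fun v _ => key v
  rw [expand]
  -- convert support sum to MIdx sum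
  have hsub : P.support ⊆ (Finset.Nat.antidiagonalTuple (d+1) N).map
      ⟨Finsupp.equivFunOnFinite.symm, Finsupp.equivFunOnFinite.symm.injective⟩ := by
    intro v hv
    have hdeg : v.degree = N := by
      by_contra h
      exact (MvPolynomial.mem_support_iff.1 hv) (hhom.coeff_eq_zero h)
    rw [Finset.mem_map]
    refine ⟨v, ?_, Finsupp.equivFunOnFinite_symm_coe v⟩
    rw [Finset.Nat.mem_antidiagonalTuple]
    rw [← hdeg, Finsupp.degree]
    exact (Finset.sum_subset (Finset.subset_univ _)
      (fun i _ hi => Finsupp.notMem_support_iff.1 hi)).symm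
  rw [Finset.sum_subset hsub (fun v _ hv => by
    rw [MvPolynomial.notMem_support_iff.1 hv, zero_mul]), Finset.sum_map]
  simp only [Function.Embedding.coeFn_mk]
  rw [Finset.sum_subtype (Finset.Nat.antidiagonalTuple (d+1) N)
    (fun l => Finset.Nat.mem_antidiagonalTuple) 
    (fun l => coeff (Finsupp.equivFunOnFinite.symm l) P
      * symPowEntry Cm (⇑(Finsupp.equivFunOnFinite.symm l)) n)]
  exact Finset.sum_congr rfl fun l _ => rfl

lemma symPow_mul (d N : ℕ) (A Cm : Matrix (Fin (d+1)) (Fin (d+1)) ℂ) :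
    symPow d N (A * Cm) = symPow d N A * symPow d N Cm := by
  ext m n
  rw [Matrix.mul_apply]
  exact symPowEntry_mul A Cm m.1 n.1 m.2

lemma symPow_diagonal (d N : ℕ) (v : Fin (d+1) → ℂ) :
    symPow d N (Matrix.diagonal v) = Matrix.diagonal (fun m : MIdx d N => ∏ i, v i ^ m.1 i) := by
  ext m n
  have h1 : ∀ i : Fin (d+1), (∑ j, C (Matrix.diagonal v i j) * X j) = C (v i) * X i := by
    intro i
    rw [Finset.sum_eq_single i (fun j _ hj => by
      rw [Matrix.diagonal_apply_ne' v hj, map_zero, zero_mul]) (fun h => absurd (Finset.mem_univ i) h)]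
    rw [Matrix.diagonal_apply_eq]
  have : symPow d N (Matrix.diagonal v) m n
      = MvPolynomial.coeff (Finsupp.equivFunOnFinite.symm n.1)
        (∏ i, (C (v i) * X i) ^ m.1 i) := by
    unfold symPow symPowEntry
    rw [Finset.prod_congr rfl (fun i _ => by rw [h1 i])]
  rw [this, CX_prod, MvPolynomial.coeff_monomial, Matrix.diagonal_apply]
  by_cases h : m = n
  · subst h; simp
  · rw [if_neg (fun hc => h (Subtype.ext (Finsupp.equivFunOnFinite.symm.injective hc))), if_neg h]

lemma symPowEntry_conj (A : Matrix (Fin (d+1)) (Fin (d+1)) ℂ) (m n : Fin (d+1) → ℕ) :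
    symPowEntry (A.map (starRingEnd ℂ)) m n = starRingEnd ℂ (symPowEntry A m n) := by
  rw [symPowEntry_expand, symPowEntry_expand, map_sum]
  refine Finset.sum_congr rfl fun g _ => ?_
  rw [_root_.map_mul (starRingEnd ℂ), map_prod, map_prod]
  congr 1
  · exact Finset.prod_congr rfl fun i _ => (map_natCast (starRingEnd ℂ) _).symm
  · refine Finset.prod_congr rfl fun i _ => ?_
    rw [map_prod]
    exact Finset.prod_congr rfl fun j _ => by rw [map_pow]; rfl

lemma multinom_symPow_conjT (d N : ℕ) (A : Matrix (Fin (d+1)) (Fin (d+1)) ℂ) :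
    multinomMat d N * symPow d N Aᴴ = (symPow d N A)ᴴ * multinomMat d N := by
  have hAT : Aᴴᵀ = A.map (starRingEnd ℂ) := by
    ext i j; rfl
  ext m n
  rw [multinomMat, Matrix.diagonal_mul, Matrix.mul_diagonal]
  show (Nat.multinomial Finset.univ m.1 : ℂ) * symPowEntry Aᴴ m.1 n.1
    = star (symPowEntry A n.1 m.1) * (Nat.multinomial Finset.univ n.1 : ℂ)
  rw [symPowEntry_transpose Aᴴ m.1 n.1, hAT, symPowEntry_conj]
  exact mul_comm _ _

/-- Dual orthogonality: under the K-condition `A* p A = D`, the Krawtchouk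
matrix `Φ = (Ā)*` satisfies `Φ* (B D̄)⁻¹ Φ = (B p̄)⁻¹`. -/
theorem krawtchouk_dual_orthogonality (d N : ℕ)
    (A : Matrix (Fin (d+1)) (Fin (d+1)) ℂ)
    (p Dv : Fin (d+1) → ℝ) (hp : ∀ i, 0 < p i) (hp1 : ∑ i, p i = 1)
    (hD : ∀ i, 0 < Dv i)
    (hK : Aᴴ * Matrix.diagonal (fun i => (p i : ℂ)) * A
      = Matrix.diagonal fun i => (Dv i : ℂ)) :
    ∀ Φ : Matrix (MIdx d N) (MIdx d N) ℂ,
      Φ = (symPow d N A)ᴴ →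
      Φᴴ * (multinomMat d N * symPow d N (Matrix.diagonal fun i => (Dv i : ℂ)))⁻¹ * Φ
        = (multinomMat d N * symPow d N (Matrix.diagonal fun i => (p i : ℂ)))⁻¹ := by
  intro Φ hΦ
  set B := multinomMat d N with hB
  set pbar := symPow d N (Matrix.diagonal fun i => (p i : ℂ)) with hpbar
  set Dbar := symPow d N (Matrix.diagonal fun i => (Dv i : ℂ)) with hDbar
  set M := B * pbar with hM
  set E := B * Dbar with hE
  -- symmetric power of K-condition
  have hKsym : symPow d N Aᴴ * pbar * symPow d N A = Dbar := by
    rw [hpbar, hDbar, ← symPow_mul, ← symPow_mul, hK]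
  -- star identity
  have star1 : Φ * M * Φᴴ = E := by
    rw [hΦ, Matrix.conjTranspose_conjTranspose, hM, hE]
    calc (symPow d N A)ᴴ * (B * pbar) * symPow d N A
        = ((symPow d N A)ᴴ * B) * pbar * symPow d N A := by
          rw [mul_assoc ((symPow d N A)ᴴ) B pbar]
      _ = (B * symPow d N Aᴴ) * pbar * symPow d N A := by rw [← multinom_symPow_conjT]
      _ = B * (symPow d N Aᴴ * pbar * symPow d N A) := by
          rw [mul_assoc, mul_assoc, mul_assoc]
      _ = B * Dbar := by rw [hKsym]
  -- invertibility of diagonal matrices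
  have hdiagM : M = Matrix.diagonal (fun m : MIdx d N =>
      (Nat.multinomial Finset.univ m.1 : ℂ) * ∏ i, (p i : ℂ) ^ m.1 i) := by
    rw [hM, hB, hpbar, symPow_diagonal, multinomMat, Matrix.diagonal_mul_diagonal]
  have hdiagE : E = Matrix.diagonal (fun m : MIdx d N =>
      (Nat.multinomial Finset.univ m.1 : ℂ) * ∏ i, (Dv i : ℂ) ^ m.1 i) := by
    rw [hE, hB, hDbar, symPow_diagonal, multinomMat, Matrix.diagonal_mul_diagonal]
  have hentry : ∀ (v : Fin (d+1) → ℝ) (hv : ∀ i, 0 < v i) (m : MIdx d N),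
      (Nat.multinomial Finset.univ m.1 : ℂ) * ∏ i, (v i : ℂ) ^ m.1 i ≠ 0 := by
    intro v hv m
    refine mul_ne_zero ?_ (Finset.prod_ne_zero_iff.2 fun i _ => pow_ne_zero _ ?_)
    · exact Nat.cast_ne_zero.2 (Nat.multinomial_pos _ _).ne'
    · exact_mod_cast (hv i).ne'
  have hMdet : IsUnit M.det := by
    rw [hdiagM, Matrix.det_diagonal]
    exact isUnit_iff_ne_zero.2 (Finset.prod_ne_zero_iff.2 fun m _ => hentry p hp m)
  have hEdet : IsUnit E.det := by
    rw [hdiagE, Matrix.det_diagonal]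
    exact isUnit_iff_ne_zero.2 (Finset.prod_ne_zero_iff.2 fun m _ => hentry Dv hD m)
  have hΦdet : IsUnit Φ.det := by
    have : Φ.det * (M.det * Φᴴ.det) = E.det := by
      rw [← Matrix.det_mul, ← Matrix.det_mul, ← mul_assoc, star1]
    exact isUnit_of_mul_isUnit_left (this ▸ hEdet)
  have hΦHdet : IsUnit Φᴴ.det := by
    rw [Matrix.det_conjTranspose]
    exact hΦdet.star
  -- conclude
  have h5 : Φ * M = E * (Φᴴ)⁻¹ := by
    have := congrArg (fun X => X * (Φᴴ)⁻¹) star1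
    simpa [mul_assoc, Matrix.mul_nonsing_inv Φᴴ hΦHdet] using this
  refine (Matrix.inv_eq_left_inv ?_).symm
  calc Φᴴ * E⁻¹ * Φ * M = Φᴴ * E⁻¹ * (Φ * M) := by rw [mul_assoc]
    _ = Φᴴ * (E⁻¹ * E) * (Φᴴ)⁻¹ := by
          rw [h5, ← mul_assoc (Φᴴ * E⁻¹) E (Φᴴ)⁻¹, mul_assoc Φᴴ E⁻¹ E]
    _ = Φᴴ * (Φᴴ)⁻¹ := by rw [Matrix.nonsing_inv_mul E hEdet, mul_one]
    _ = 1 := Matrix.mul_nonsing_inv Φᴴ hΦHdet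
end
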